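/- arXiv:2111.10314 — 2 statements merged into one kernel-verified Lean document; each statement's English description precedes it below -/
import Mathlib

section
/- For every k ≥ 1, there is a constant C such that for all m ≥ 1, |p̄_k(m)·k!·(k-1)! − m^{k-1}| ≤ C·m^{k-2}. -/
/-- `pbar k m` is the number of partitions of `m` into at most `k` parts. -/
def pbar (k m : ℕ) : ℕ :=
  Fintype.card {p : Nat.Partition m // p.parts.card ≤ k}

namespace PbarAux

open Finset
open scoped Nat

instance decMono (k : ℕ) : DecidablePred (fun f : Fin k → ℕ => Monotone f) := fun f =>
  decidable_of_iff (∀ i j : Fin k, i ≤ j → f i ≤ f j)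
    ⟨fun h _ _ hij => h _ _ hij, fun h i j hij => h hij⟩

instance decSM (k : ℕ) : DecidablePred (fun f : Fin k → ℕ => StrictMono f) := fun f =>
  decidable_of_iff (∀ i j : Fin k, i < j → f i < f j)
    ⟨fun h _ _ hij => h _ _ hij, fun h i j hij => h hij⟩

/-- The finset of monotone `k`-tuples summing to `m`. -/
def S (k m : ℕ) : Finset (Fin k → ℕ) :=
  (Finset.Nat.antidiagonalTuple k m).filter (fun f => Monotone f)

lemma mem_S {k m : ℕ} {f : Fin k → ℕ} : f ∈ S k m ↔ (∑ i, f i) = m ∧ Monotone f := by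
  simp [S, Finset.Nat.mem_antidiagonalTuple]

/-- Auxiliary hockey-stick style summation. -/
lemma sum_choose_aux (c n : ℕ) :
    ∑ j ∈ range (n + 1), (j + c - 1).choose j = (n + c).choose n := by
  rcases c with _ | c
  · rw [Finset.sum_eq_single 0]
    · simp
    · rintro (_ | j) _ hj
      · exact absurd rfl hj
      · exact Nat.choose_eq_zero_of_lt (by omega)
    · intro h; exact absurd (Finset.mem_range.mpr (by omega)) h
  · have h1 : ∀ j : ℕ, (j + (c + 1) - 1).choose j = (j + c).choose c := by
      intro j
      have e : j + (c + 1) - 1 = j + c := by omega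
      rw [e, ← Nat.choose_symm (Nat.le_add_right j c)]
      congr 1
      omega
    simp only [h1]
    have h3 : ∑ j ∈ range (n + 1), (j + c).choose c
        = ∑ i ∈ Finset.Icc c (n + c), i.choose c := by
      rw [← Finset.Ico_add_one_right_eq_Icc, Finset.sum_Ico_eq_sum_range]
      have e : n + c + 1 - c = n + 1 := by omega
      rw [e]
      exact Finset.sum_congr rfl fun j _ => by rw [Nat.add_comm]
    rw [h3, Nat.sum_Icc_choose]
    have h4 := Nat.choose_symm (show n ≤ n + c + 1 by omega)
    rw [show n + c + 1 - n = c + 1 by omega] at h4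
    rw [h4, ← Nat.add_assoc]

/-- Cardinality of `piAntidiag` (stars and bars). -/
lemma card_piAntidiag {ι : Type*} [DecidableEq ι] (s : Finset ι) (n : ℕ) :
    (s.piAntidiag n).card = (n + s.card - 1).choose n := by
  induction s using Finset.cons_induction generalizing n with
  | empty =>
    rcases n with _ | n
    · simp
    · rw [Finset.piAntidiag_empty_of_ne_zero (by omega)]
      rw [Finset.card_empty, Finset.card_empty, eq_comm]
      exact Nat.choose_eq_zero_of_lt (by omega)
  | cons i s hi ih =>
    rw [Finset.piAntidiag_cons hi, Finset.card_disjiUnion]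
    simp only [Finset.card_map, ih]
    rw [Finset.Nat.sum_antidiagonal_eq_sum_range_succ_mk]
    have h : ∑ k ∈ range (n + 1), (n - k + s.card - 1).choose (n - k)
         = ∑ j ∈ range (n + 1), (j + s.card - 1).choose j := by
      rw [← Finset.sum_range_reflect]
      refine Finset.sum_congr rfl fun j hj => ?_
      simp only [Finset.mem_range] at hj
      rw [show n + 1 - 1 - j = n - j from by omega,
        show n - (n - j) = j from by omega]
    simp only at h ⊢
    rw [h, sum_choose_aux, Finset.card_cons,
      show n + (s.card + 1) - 1 = n + s.card from by omega]

lemma card_antidiagonalTuple (k m : ℕ) :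
    (Finset.Nat.antidiagonalTuple k m).card = (m + k - 1).choose m := by
  classical
  rw [← Finset.piAntidiag_univ_fin_eq_antidiagonalTuple m k, card_piAntidiag,
    Finset.card_univ, Fintype.card_fin]

lemma sum_filter_ne_zero (M : Multiset ℕ) : (M.filter (fun x => x ≠ 0)).sum = M.sum := by
  conv_rhs => rw [← Multiset.filter_add_not (fun x => x ≠ 0) M]
  rw [Multiset.sum_add]
  have h0 : (M.filter (fun x => ¬ x ≠ 0)).sum = 0 :=
    Multiset.sum_eq_zero (fun x hx => by simpa using (Multiset.mem_filter.mp hx).2)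
  omega

lemma eq_of_filter_eq {k : ℕ} {f g : Fin k → ℕ}
    (h : Multiset.filter (fun x => x ≠ 0) ((List.ofFn f : List ℕ) : Multiset ℕ)
       = Multiset.filter (fun x => x ≠ 0) ((List.ofFn g : List ℕ) : Multiset ℕ))
    (hf : Monotone f) (hg : Monotone g) : f = g := by
  classical
  set Mf : Multiset ℕ := ((List.ofFn f : List ℕ) : Multiset ℕ) with hMfdef
  set Mg : Multiset ℕ := ((List.ofFn g : List ℕ) : Multiset ℕ) with hMgdef
  have h1 := Multiset.filter_add_not (fun x => x ≠ 0) Mf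
  have h2 := Multiset.filter_add_not (fun x => x ≠ 0) Mg
  have hcf : Multiset.card Mf = k := by simp [hMfdef]
  have hcg : Multiset.card Mg = k := by simp [hMgdef]
  have hcc : Multiset.card (Multiset.filter (fun x => ¬ x ≠ 0) Mf)
      = Multiset.card (Multiset.filter (fun x => ¬ x ≠ 0) Mg) := by
    have c1 := congrArg Multiset.card h1
    have c2 := congrArg Multiset.card h2
    rw [Multiset.card_add] at c1 c2
    rw [hcf] at c1; rw [hcg] at c2
    rw [h] at c1
    omega
  have hrep1 : Multiset.filter (fun x => ¬ x ≠ 0) Mf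
      = Multiset.replicate (Multiset.card (Multiset.filter (fun x => ¬ x ≠ 0) Mf)) 0 :=
    Multiset.eq_replicate_card.mpr (fun b hb => by simpa using (Multiset.mem_filter.mp hb).2)
  have hrep2 : Multiset.filter (fun x => ¬ x ≠ 0) Mg
      = Multiset.replicate (Multiset.card (Multiset.filter (fun x => ¬ x ≠ 0) Mg)) 0 :=
    Multiset.eq_replicate_card.mpr (fun b hb => by simpa using (Multiset.mem_filter.mp hb).2)
  have hMM : Mf = Mg := by
    rw [← h1, ← h2, h, hrep1, hrep2, hcc]
  have hperm : (List.ofFn f).Perm (List.ofFn g) := Multiset.coe_eq_coe.mp hMM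
  have heq : List.ofFn f = List.ofFn g :=
    List.Perm.eq_of_pairwise' hf.sortedLE_ofFn.pairwise hg.sortedLE_ofFn.pairwise hperm
  exact List.ofFn_injective heq

lemma pbar_eq_card_S (k m : ℕ) : pbar k m = (S k m).card := by
  classical
  have FS : ∀ f : Fin k → ℕ, f ∈ S k m →
      (Multiset.filter (fun x => x ≠ 0) ((List.ofFn f : List ℕ) : Multiset ℕ)).sum = m := by
    intro f hf
    rw [sum_filter_ne_zero, Multiset.sum_coe, List.sum_ofFn]
    exact (mem_S.mp hf).1
  let F : {f : Fin k → ℕ // f ∈ S k m} → {p : Nat.Partition m // p.parts.card ≤ k} :=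
    fun ⟨f, hf⟩ =>
      ⟨{ parts := Multiset.filter (fun x => x ≠ 0) ((List.ofFn f : List ℕ) : Multiset ℕ)
         parts_pos := fun hi => Nat.pos_of_ne_zero (Multiset.mem_filter.mp hi).2
         parts_sum := FS f hf },
       by
        have hcle : Multiset.card
            (Multiset.filter (fun x => x ≠ 0) ((List.ofFn f : List ℕ) : Multiset ℕ))
            ≤ Multiset.card ((List.ofFn f : List ℕ) : Multiset ℕ) :=
          Multiset.card_le_card (Multiset.filter_le _ _)
        simpa using hcle⟩
  have hinj : Function.Injective F := by
    rintro ⟨f, hf⟩ ⟨g, hg⟩ hFfg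
    have hparts := congrArg (fun q => q.1.parts) hFfg
    simp only [F] at hparts
    exact Subtype.ext (eq_of_filter_eq hparts (mem_S.mp hf).2 (mem_S.mp hg).2)
  have hsurj : Function.Surjective F := by
    rintro ⟨p, hpk⟩
    set l0 : List ℕ := p.parts.sort (· ≤ ·) with hl0
    set l : List ℕ := List.replicate (k - p.parts.card) 0 ++ l0 with hl
    have hl0len : l0.length = p.parts.card := Multiset.length_sort _
    have hlen : l.length = k := by
      rw [hl, List.length_append, List.length_replicate, hl0len]
      omega
    set f : Fin k → ℕ := fun i => l.get (Fin.cast hlen.symm i) with hfdef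
    have hofn : List.ofFn f = l := by
      apply List.ext_getElem
      · simp [hlen]
      · intro i h1 h2
        rw [List.getElem_ofFn]
        rfl
    have hsort : l.Pairwise (· ≤ ·) := by
      rw [hl, List.pairwise_append]
      refine ⟨by simp [List.pairwise_replicate], Multiset.pairwise_sort _ _, ?_⟩
      intro x hx y _
      rw [List.eq_of_mem_replicate hx]
      exact Nat.zero_le y
    have hmono : Monotone f := by
      intro i j hij
      apply hsort.sortedLE.monotone_get
      rw [Fin.le_def] at hij ⊢
      exact hij
    have hsum : ∑ i, f i = m := by
      have h1 : (List.ofFn f).sum = ∑ i, f i := List.sum_ofFn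
      have h2 : l.sum = m := by
        rw [hl, List.sum_append, List.sum_replicate]
        have h3 : (↑l0 : Multiset ℕ).sum = p.parts.sum := by rw [hl0, Multiset.sort_eq]
        simp only [Multiset.sum_coe] at h3
        rw [h3, p.parts_sum]
        simp
      rw [← h1, hofn, h2]
    have hfS : f ∈ S k m := mem_S.mpr ⟨hsum, hmono⟩
    refine ⟨⟨f, hfS⟩, ?_⟩
    apply Subtype.ext
    apply Nat.Partition.ext
    show Multiset.filter (fun x => x ≠ 0) ((List.ofFn f : List ℕ) : Multiset ℕ) = p.parts
    rw [hofn, hl]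
    have hcoe : ((List.replicate (k - p.parts.card) 0 ++ l0 : List ℕ) : Multiset ℕ)
        = ((List.replicate (k - p.parts.card) 0 : List ℕ) : Multiset ℕ) + (↑l0 : Multiset ℕ) := by
      simp
    rw [hcoe, Multiset.filter_add]
    have hz : Multiset.filter (fun x => x ≠ 0)
        ((List.replicate (k - p.parts.card) 0 : List ℕ) : Multiset ℕ) = 0 :=
      Multiset.filter_eq_nil.mpr (fun a ha => by
        simpa using List.eq_of_mem_replicate (Multiset.mem_coe.mp ha))
    have hs : Multiset.filter (fun x => x ≠ 0) (↑l0 : Multiset ℕ) = (↑l0 : Multiset ℕ) :=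
      Multiset.filter_eq_self.mpr (fun a ha => by
        have : a ∈ p.parts := by
          rw [← Multiset.sort_eq p.parts (· ≤ ·)]
          exact ha
        exact (p.parts_pos this).ne')
    rw [hz, hs, zero_add, hl0, Multiset.sort_eq]
  rw [pbar, ← Fintype.card_coe (S k m),
    Fintype.card_of_bijective ⟨hinj, hsurj⟩]

lemma card_A_le (k m : ℕ) :
    (Finset.Nat.antidiagonalTuple k m).card ≤ (S k m).card * k ! := by
  classical
  have h := Finset.card_le_card_of_injOn
    (f := fun f : Fin k → ℕ => (f ∘ Tuple.sort f, Tuple.sort f))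
    (s := Finset.Nat.antidiagonalTuple k m)
    (t := (S k m) ×ˢ (Finset.univ : Finset (Equiv.Perm (Fin k)))) ?_ ?_
  · simpa [Finset.card_product, Finset.card_univ, Fintype.card_perm, Fintype.card_fin] using h
  · intro f hf
    rw [Finset.mem_coe, Finset.Nat.mem_antidiagonalTuple] at hf
    rw [Finset.mem_coe, Finset.mem_product]
    refine ⟨mem_S.mpr ⟨?_, Tuple.monotone_sort f⟩, Finset.mem_univ _⟩
    rw [show (∑ i, (f ∘ Tuple.sort f) i) = ∑ i, f (Tuple.sort f i) from rfl,
      Equiv.sum_comp (Tuple.sort f) f]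
    exact hf
  · intro f _ g _ hfg
    simp only [Prod.mk.injEq] at hfg
    obtain ⟨h1, h2⟩ := hfg
    rw [h2] at h1
    funext x
    have h3 := congrFun h1 ((Tuple.sort g).symm x)
    simpa using h3

lemma card_S_strict_le (k m : ℕ) :
    ((S k m).filter (fun f => StrictMono f)).card * k ! ≤
      (Finset.Nat.antidiagonalTuple k m).card := by
  classical
  have h := Finset.card_le_card_of_injOn
    (f := fun p : (Fin k → ℕ) × Equiv.Perm (Fin k) => p.1 ∘ p.2)
    (s := ((S k m).filter (fun f => StrictMono f)) ×ˢ Finset.univ)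
    (t := Finset.Nat.antidiagonalTuple k m) ?_ ?_
  · simpa [Finset.card_product, Finset.card_univ, Fintype.card_perm, Fintype.card_fin] using h
  · rintro ⟨g, σ⟩ hp
    rw [Finset.mem_coe, Finset.mem_product, Finset.mem_filter] at hp
    obtain ⟨⟨hgS, _⟩, _⟩ := hp
    rw [Finset.mem_coe, Finset.Nat.mem_antidiagonalTuple]
    rw [show (∑ i, (g ∘ σ) i) = ∑ i, g (σ i) from rfl, Equiv.sum_comp σ g]
    exact (mem_S.mp hgS).1
  · rintro ⟨g, σ⟩ hp ⟨g', σ'⟩ hp' hfg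
    simp only [Finset.mem_coe, Finset.mem_product, Finset.mem_filter] at hp hp'
    obtain ⟨⟨hgS, hgSM⟩, -⟩ := hp
    obtain ⟨⟨hgS', hgSM'⟩, -⟩ := hp'
    have hgM := (mem_S.mp hgS).2
    have hgM' := (mem_S.mp hgS').2
    simp only at hfg
    have hg' : g ∘ (σ'.symm.trans σ : Equiv.Perm (Fin k)) = g' := by
      funext x
      have h2 := congrFun hfg (σ'.symm x)
      simpa using h2
    have heq : g ∘ (Equiv.refl (Fin k)) = g ∘ (σ'.symm.trans σ : Equiv.Perm (Fin k)) :=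
      Tuple.unique_monotone (by simpa using hgM) (by rw [hg']; exact hgM')
    have hgg : g = g' := by
      rw [← hg', ← heq]
      rfl
    have hσ : σ = σ' := by
      apply Equiv.ext; intro x
      apply hgSM.injective
      have h2 := congrFun hfg x
      simp only [Function.comp_apply, ← hgg] at h2
      exact h2
    simp [Prod.ext_iff, hgg, hσ]

lemma exists_rep {K : ℕ} {g : Fin (K + 2) → ℕ} (hgM : Monotone g) (hns : ¬ StrictMono g) :
    ∃ i : Fin (K + 1), g i.castSucc = g i.succ := by
  by_contra hc
  push_neg at hc
  apply hns
  rw [Fin.strictMono_iff_lt_succ]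
  intro i
  exact lt_of_le_of_ne (hgM (Fin.castSucc_lt_succ (i := i)).le) (hc i)

lemma card_S_rep_le (K m : ℕ) :
    ((S (K + 2) m).filter (fun f => ¬ StrictMono f)).card ≤ (K + 1) * (m + 1) ^ K := by
  classical
  have h := Finset.card_le_card_of_injOn
    (f := fun g : Fin (K + 2) → ℕ =>
      if h : ∃ i : Fin (K + 1), g i.castSucc = g i.succ then
        ((h.choose, fun j : Fin K =>
          ⟨g (h.choose.succ.succAbove (h.choose.succAbove j)) % (m + 1),
            Nat.mod_lt _ (Nat.succ_pos m)⟩) : Fin (K + 1) × (Fin K → Fin (m + 1)))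
      else (0, fun _ => 0))
    (s := (S (K + 2) m).filter (fun f => ¬ StrictMono f))
    (t := (Finset.univ : Finset (Fin (K + 1) × (Fin K → Fin (m + 1)))))
    (fun _ _ => Finset.mem_univ _) ?_
  · refine h.trans ?_
    rw [Finset.card_univ, Fintype.card_prod, Fintype.card_fun, Fintype.card_fin,
      Fintype.card_fin, Fintype.card_fin]
  · rintro g hg g' hg' heq
    simp only [Finset.coe_filter, Set.mem_setOf_eq] at hg hg'
    obtain ⟨hgS, hgns⟩ := hg
    obtain ⟨hgS', hgns'⟩ := hg'
    obtain ⟨hsum, hgM⟩ := mem_S.mp hgS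
    obtain ⟨hsum', hgM'⟩ := mem_S.mp hgS'
    have hex := exists_rep hgM hgns
    have hex' := exists_rep hgM' hgns'
    simp only [dif_pos hex, dif_pos hex', Prod.mk.injEq] at heq
    obtain ⟨hi, hfun⟩ := heq
    rw [← hi] at hfun
    have hgi : g hex.choose.castSucc = g hex.choose.succ := hex.choose_spec
    have hgi' : g' hex.choose.castSucc = g' hex.choose.succ := by
      rw [hi]; exact hex'.choose_spec
    set i := hex.choose with hidef
    have hbd : ∀ x, g x ≤ m := fun x =>
      hsum ▸ Finset.single_le_sum (f := g) (fun _ _ => Nat.zero_le _) (Finset.mem_univ x)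
    have hbd' : ∀ x, g' x ≤ m := fun x =>
      hsum' ▸ Finset.single_le_sum (f := g') (fun _ _ => Nat.zero_le _) (Finset.mem_univ x)
    have hvals : ∀ j : Fin K,
        g (i.succ.succAbove (i.succAbove j)) = g' (i.succ.succAbove (i.succAbove j)) := by
      intro j
      have h2 := congrArg Fin.val (congrFun hfun j)
      simpa [Nat.mod_eq_of_lt (Nat.lt_succ_of_le (hbd _)),
        Nat.mod_eq_of_lt (Nat.lt_succ_of_le (hbd' _))] using h2
    have hsA : i.succ.succAbove i = i.castSucc :=
      Fin.succAbove_of_castSucc_lt i.succ i (Fin.castSucc_lt_succ (i := i))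
    set h₁ : Fin (K + 1) → ℕ := i.succ.removeNth g with hh1
    set h₂ : Fin (K + 1) → ℕ := i.succ.removeNth g' with hh2
    have hd1 : h₁ i = g i.succ := by
      show g (i.succ.succAbove i) = g i.succ
      rw [hsA]; exact hgi
    have hd2 : h₂ i = g' i.succ := by
      show g' (i.succ.succAbove i) = g' i.succ
      rw [hsA]; exact hgi'
    have hrem : i.removeNth h₁ = i.removeNth h₂ := funext fun j => hvals j
    have hs1 : m = g i.succ + ∑ j, h₁ j := by
      rw [← hsum, Fin.sum_univ_succAbove g i.succ]; rfl
    have hs2 : m = g' i.succ + ∑ j, h₂ j := by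
      rw [← hsum', Fin.sum_univ_succAbove g' i.succ]; rfl
    have hs3 : ∑ j, h₁ j = h₁ i + ∑ j : Fin K, (i.removeNth h₁) j :=
      Fin.sum_univ_succAbove h₁ i
    have hs4 : ∑ j, h₂ j = h₂ i + ∑ j : Fin K, (i.removeNth h₂) j :=
      Fin.sum_univ_succAbove h₂ i
    have hsame : ∑ j : Fin K, (i.removeNth h₁) j = ∑ j : Fin K, (i.removeNth h₂) j := by
      rw [hrem]
    have hvv : g i.succ = g' i.succ := by omega
    have hdd : h₁ i = h₂ i := by rw [hd1, hd2, hvv]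
    have hh : h₁ = h₂ := by
      rw [← Fin.insertNth_self_removeNth i h₁, ← Fin.insertNth_self_removeNth i h₂, hrem, hdd]
    have hrem2 : i.succ.removeNth g = i.succ.removeNth g' := hh
    rw [← Fin.insertNth_self_removeNth i.succ g, ← Fin.insertNth_self_removeNth i.succ g',
      hrem2, hvv]

lemma le_asc (m j : ℕ) (hm : 1 ≤ m) : m ^ j ≤ (m + 1).ascFactorial j := by
  induction j with
  | zero => simp
  | succ j ih =>
    rw [Nat.ascFactorial_succ, pow_succ]
    calc m ^ j * m ≤ (m + 1).ascFactorial j * (m + 1 + j) :=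
          Nat.mul_le_mul ih (by omega)
      _ = (m + 1 + j) * (m + 1).ascFactorial j := Nat.mul_comm _ _

lemma asc_le (m j : ℕ) (hm : 1 ≤ m) :
    (m + 1).ascFactorial (j + 1) ≤ m ^ (j + 1) + (2 * j + 4)! * m ^ j := by
  induction j with
  | zero =>
    rw [Nat.ascFactorial_succ, Nat.ascFactorial_zero]
    norm_num [Nat.factorial]
  | succ j ih =>
    rw [Nat.ascFactorial_succ]
    have step1 : (m + 1 + (j + 1)) * (m + 1).ascFactorial (j + 1)
        ≤ (m + j + 2) * (m ^ (j + 1) + (2 * j + 4)! * m ^ j) :=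
      Nat.mul_le_mul (by omega) ih
    refine step1.trans ?_
    have hD : (2 * (j + 1) + 4)! = (2 * j + 6) * ((2 * j + 5) * (2 * j + 4)!) := by
      rw [show 2 * (j + 1) + 4 = (2 * j + 5) + 1 from by ring, Nat.factorial_succ,
        show 2 * j + 5 = (2 * j + 4) + 1 from by ring, Nat.factorial_succ]
    have hDge : j + 2 ≤ (2 * j + 4)! := le_trans (by omega) (Nat.self_le_factorial _)
    have hcoef : (j + 2) + (2 * j + 4)! + (j + 2) * (2 * j + 4)! ≤ (2 * (j + 1) + 4)! := by
      rw [hD]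
      nlinarith [Nat.one_le_iff_ne_zero.mpr (Nat.factorial_ne_zero (2 * j + 4))]
    have hpow : m ^ j ≤ m ^ (j + 1) := Nat.pow_le_pow_right (by omega) (by omega)
    calc (m + j + 2) * (m ^ (j + 1) + (2 * j + 4)! * m ^ j)
        = m ^ (j + 2) + ((j + 2) + (2 * j + 4)!) * m ^ (j + 1)
            + (j + 2) * ((2 * j + 4)! * m ^ j) := by ring
      _ ≤ m ^ (j + 2) + ((j + 2) + (2 * j + 4)!) * m ^ (j + 1)
            + (j + 2) * ((2 * j + 4)! * m ^ (j + 1)) := by gcongr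
      _ = ((j + 2) + (2 * j + 4)! + (j + 2) * (2 * j + 4)!) * m ^ (j + 1)
            + m ^ (j + 2) := by ring
      _ ≤ (2 * (j + 1) + 4)! * m ^ (j + 1) + m ^ (j + 2) :=
            Nat.add_le_add_right (Nat.mul_le_mul_right _ hcoef) _
      _ = m ^ (j + 1 + 1) + (2 * (j + 1) + 4)! * m ^ (j + 1) := by ring

lemma main_nat (K m : ℕ) (hm : 1 ≤ m) :
    m ^ (K + 1) ≤ pbar (K + 2) m * (K+2) ! * (K+1) ! ∧
    pbar (K + 2) m * (K+2) ! * (K+1) ! ≤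
      m ^ (K + 1) + ((2 * K + 4)! + (K+1) ! * (K+2) ! * ((K + 1) * 2 ^ K)) * m ^ K := by
  classical
  set A := (Finset.Nat.antidiagonalTuple (K + 2) m).card with hAdef
  have hPA : (m + 1).ascFactorial (K + 1) = (K+1) ! * A := by
    rw [hAdef, card_antidiagonalTuple, Nat.ascFactorial_eq_factorial_mul_choose]
    congr 1
    have h4 := Nat.choose_symm (show m ≤ m + K + 1 by omega)
    rw [show m + K + 1 - m = K + 1 from by omega] at h4
    rw [show m + (K + 2) - 1 = m + K + 1 from by omega, ← h4, ← Nat.add_assoc]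
  have h1 : A ≤ (S (K + 2) m).card * (K+2) ! := card_A_le (K + 2) m
  have h3 : ((S (K + 2) m).filter (fun f => StrictMono f)).card * (K+2) ! ≤ A :=
    card_S_strict_le (K + 2) m
  have h4 : ((S (K + 2) m).filter (fun f => ¬ StrictMono f)).card ≤ (K + 1) * (m + 1) ^ K :=
    card_S_rep_le K m
  have hsplit : (S (K + 2) m).card =
      ((S (K + 2) m).filter (fun f => StrictMono f)).card +
      ((S (K + 2) m).filter (fun f => ¬ StrictMono f)).card :=
    (Finset.card_filter_add_card_filter_not (p := fun f => StrictMono f)).symm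
  have hpow : (m + 1) ^ K ≤ 2 ^ K * m ^ K := by
    calc (m + 1) ^ K ≤ (2 * m) ^ K := Nat.pow_le_pow_left (by omega) K
      _ = 2 ^ K * m ^ K := mul_pow 2 m K
  have e : pbar (K + 2) m * (K+2) ! * (K+1) ! = (K+1) ! * ((S (K + 2) m).card * (K+2) !) := by
    rw [pbar_eq_card_S]; ring
  constructor
  · rw [e]
    calc m ^ (K + 1) ≤ (m + 1).ascFactorial (K + 1) := le_asc m (K + 1) hm
      _ = (K+1) ! * A := hPA
      _ ≤ (K+1) ! * ((S (K + 2) m).card * (K+2) !) := Nat.mul_le_mul_left _ h1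
  · rw [e]
    calc (K+1) ! * ((S (K + 2) m).card * (K+2) !)
        = (K+1) ! * (((S (K + 2) m).filter (fun f => StrictMono f)).card * (K+2) !)
          + (K+1) ! * (K+2) ! * ((S (K + 2) m).filter (fun f => ¬ StrictMono f)).card := by
          rw [hsplit]; ring
      _ ≤ (K+1) ! * A + (K+1) ! * (K+2) ! * ((K + 1) * (m + 1) ^ K) :=
          Nat.add_le_add (Nat.mul_le_mul_left _ h3) (Nat.mul_le_mul_left _ h4)
      _ ≤ (m ^ (K + 1) + (2 * K + 4)! * m ^ K)
          + (K+1) ! * (K+2) ! * ((K + 1) * (2 ^ K * m ^ K)) := by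
          refine Nat.add_le_add ?_ ?_
          · rw [← hPA]; exact asc_le m K hm
          · exact Nat.mul_le_mul_left _ (Nat.mul_le_mul_left _ hpow)
      _ = m ^ (K + 1) + ((2 * K + 4)! + (K+1) ! * (K+2) ! * ((K + 1) * 2 ^ K)) * m ^ K := by
          ring

lemma pbar_one (m : ℕ) : pbar 1 m = 1 := by
  rw [pbar_eq_card_S]
  have h : S 1 m = {![m]} := by
    rw [S, Finset.Nat.antidiagonalTuple_one, Finset.filter_singleton, if_pos]
    exact fun i j _ => le_of_eq (congrArg _ (Subsingleton.elim i j))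
  rw [h, Finset.card_singleton]

end PbarAux

/-- Quantitative form of `pbar k m = m^(k-1)/(k!(k-1)!) + O(m^(k-2))`. -/
theorem pbar_error_bound (k : ℕ) (hk : 1 ≤ k) :
    ∃ C : ℝ, ∀ m : ℕ, 1 ≤ m →
      |(pbar k m : ℝ) * (Nat.factorial k) * (Nat.factorial (k - 1)) - (m : ℝ) ^ (k - 1)| ≤
        C * (m : ℝ) ^ (k - 2) := by
  rcases k with _ | _ | K
  · omega
  · refine ⟨0, fun m hm => ?_⟩
    rw [PbarAux.pbar_one m]
    norm_num [Nat.factorial]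
  · refine ⟨((Nat.factorial (2 * K + 4) + Nat.factorial (K+1) * Nat.factorial (K+2) * ((K + 1) * 2 ^ K) : ℕ) : ℝ),
      fun m hm => ?_⟩
    obtain ⟨hlo, hhi⟩ := PbarAux.main_nat K m hm
    have e1 : K + 2 - 1 = K + 1 := by omega
    have e2 : K + 2 - 2 = K := by omega
    rw [e1, e2]
    have hlo' : ((m : ℝ)) ^ (K + 1) ≤ (pbar (K + 2) m : ℝ) * Nat.factorial (K+2) * Nat.factorial (K+1) := by
      exact_mod_cast hlo
    have hhi' : (pbar (K + 2) m : ℝ) * Nat.factorial (K+2) * Nat.factorial (K+1) ≤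
        (m : ℝ) ^ (K + 1) +
          ((Nat.factorial (2 * K + 4) + Nat.factorial (K+1) * Nat.factorial (K+2) * ((K + 1) * 2 ^ K) : ℕ) : ℝ) * (m : ℝ) ^ K := by
      exact_mod_cast hhi
    have hCpos : (0 : ℝ) ≤ ((Nat.factorial (2 * K + 4) + Nat.factorial (K+1) * Nat.factorial (K+2) * ((K + 1) * 2 ^ K) : ℕ) : ℝ) :=
      Nat.cast_nonneg _
    have hmpos : (0 : ℝ) ≤ (m : ℝ) ^ K := by positivity
    rw [abs_le]
    constructor
    · nlinarith
    · nlinarith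
end

section
/- Fix N ≥ 2. For D > N^3, the dimension of the direct sum over strictly increasing tuples p_1 < ⋯ < p_N summing to D of the tensor products S^{p_1}W* ⊗ ⋯ ⊗ S^{p_N}W* (W of dimension 3), restricted to tuples with p_1 ≥ D/(2N), is at least q̄_N(D/2) times Π over the minimal term, and is asymptotically at least D^{3N−1}·e^{2N−1}/(π·2^{4N}·N^{4N−2})·(1 + o(1)) as D → ∞. -/
/-- `qbar k m` is the number of partitions of `m` into distinct (strictly decreasing)
parts with exactly `k` or `k - 1` parts. -/
def qbar (k m : ℕ) : ℕ :=
  Fintype.card {p : Nat.Partition m // p.parts.Nodup ∧ (p.parts.card = k ∨ p.parts.card = k - 1)}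

open scoped Classical in
/-- The dimension of the `(N,D)`-target space: the sum over strictly increasing tuples
`p₁ < ⋯ < p_N` summing to `D` of `∏ⱼ dim S^{pⱼ}W* = ∏ⱼ C(pⱼ+2,2)` (with `dim W = 3`). -/
noncomputable def targetDim (N D : ℕ) : ℕ :=
  ∑ p ∈ Finset.univ.filter
      (fun p : Fin N → Fin (D + 1) => StrictMono p ∧ ∑ i, (p i : ℕ) = D),
    ∏ i, ((p i : ℕ) + 2).choose 2


open Finset Filter Real
namespace TDLB

def f (x : ℕ) : ℕ := (x + 2).choose 2

lemma two_mul_f (x : ℕ) : 2 * f x = (x + 1) * (x + 2) := by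
  obtain ⟨c, hc⟩ : Even ((x + 1) * (x + 2)) := Nat.even_mul_succ_self (x + 1)
  have hm : x + 2 - 1 = x + 1 := rfl
  have hm2 : (x + 2) * (x + 1) = (x + 1) * (x + 2) := mul_comm _ _
  unfold f
  rw [Nat.choose_two_right, hm]
  omega

lemma f_mono : Monotone f := fun a b h => Nat.choose_le_choose 2 (by omega)

lemma f_pos (x : ℕ) : 0 < f x := Nat.choose_pos (by omega)

lemma pairing {a b : ℕ} (t : ℕ) (hab : a ≤ b) : f a * f (b + t) ≤ f (a + t) * f b := by
  have h4 : 4 * (f a * f (b + t)) ≤ 4 * (f (a + t) * f b) := by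
    have e1 : 4 * (f a * f (b + t)) = (2 * f a) * (2 * f (b + t)) := by ring
    have e2 : 4 * (f (a + t) * f b) = (2 * f (a + t)) * (2 * f b) := by ring
    rw [e1, e2, two_mul_f, two_mul_f, two_mul_f, two_mul_f]
    have h1 : (a + 1) * (b + t + 1) ≤ (a + t + 1) * (b + 1) := by nlinarith
    have h2 : (a + 2) * (b + t + 2) ≤ (a + t + 2) * (b + 2) := by nlinarith
    calc (a + 1) * (a + 2) * ((b + t + 1) * (b + t + 2))
        = ((a + 1) * (b + t + 1)) * ((a + 2) * (b + t + 2)) := by ring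
      _ ≤ ((a + t + 1) * (b + 1)) * ((a + t + 2) * (b + 2)) := Nat.mul_le_mul h1 h2
      _ = (a + t + 1) * (a + t + 2) * ((b + 1) * (b + 2)) := by ring
  omega

lemma sum_fin_id (n : ℕ) : ∑ i : Fin n, (i : ℕ) = n.choose 2 := by
  rw [Fin.sum_univ_eq_sum_range (fun i => i) n, Finset.sum_range_id, Nat.choose_two_right]

lemma sum_lb {n b : ℕ} {p : Fin n → ℕ} (hlb : ∀ i : Fin n, b + (i : ℕ) ≤ p i) :
    n * b + n.choose 2 ≤ ∑ i, p i := by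
  calc n * b + n.choose 2 = ∑ i : Fin n, (b + (i : ℕ)) := by
        rw [Finset.sum_add_distrib, sum_fin_id]; simp [mul_comm]
    _ ≤ ∑ i, p i := Finset.sum_le_sum fun i _ => hlb i

lemma prod_f_ge : ∀ (n : ℕ) (b : ℕ) (p : Fin n → ℕ), StrictMono p →
    (∀ i : Fin n, b + (i : ℕ) ≤ p i) →
    (∏ j ∈ Finset.range (n - 1), f (b + j)) *
      f ((∑ i, p i) - ((n - 1) * b + (n - 1).choose 2)) ≤ ∏ i, f (p i) := by
  intro n
  induction n with
  | zero => intro b p _ _; simp [f]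
  | succ k ih =>
    intro b p hmono hlb
    match k, ih with
    | 0, _ => simp
    | k + 1, ih =>
      -- p : Fin (k+2) → ℕ
      set t := p 0 - b with ht
      have hp0' := hlb 0
      have hp0 : p 0 = b + t := by simp only [Fin.val_zero, add_zero] at hp0'; omega
      set q : Fin (k + 1) → ℕ := fun i => p i.succ + if i = Fin.last k then t else 0 with hq
      have hqp : ∀ i : Fin (k + 1), q i = p i.succ + if i = Fin.last k then t else 0 :=
        fun i => rfl
      have hqmono : StrictMono q := by
        intro i j hij
        have hine : i ≠ Fin.last k := by
          intro h
          have : (j : ℕ) ≤ k := Nat.lt_succ_iff.mp j.isLt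
          have : (i : ℕ) < (j : ℕ) := hij
          have : (i : ℕ) < k := by omega
          simp [h, Fin.last] at this
        have h1 : q i = p i.succ := by rw [hqp i, if_neg hine, add_zero]
        have h2 : p j.succ ≤ q j := by rw [hqp j]; split <;> omega
        have h3 : p i.succ < p j.succ := hmono (Fin.succ_lt_succ_iff.mpr hij)
        omega
      have hqlb : ∀ i : Fin (k + 1), (b + 1) + (i : ℕ) ≤ q i := by
        intro i
        have h1 := hlb i.succ
        rw [Fin.val_succ] at h1
        have h2 : p i.succ ≤ q i := by rw [hqp i]; split <;> omega
        omega
      have hqsum : ∑ i, q i = (∑ i : Fin (k + 1), p i.succ) + t := by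
        rw [show (fun i => q i) = fun i => p i.succ + if i = Fin.last k then t else 0 from rfl]
        rw [Finset.sum_add_distrib, Finset.sum_ite_eq' Finset.univ (Fin.last k)]
        simp
      have hsump : ∑ i, p i = p 0 + ∑ i : Fin (k + 1), p i.succ := Fin.sum_univ_succ p
      have hlow : (k + 2) * b + (k + 2).choose 2 ≤ ∑ i, p i := sum_lb hlb
      have hch2 : (k + 2).choose 2 = (k + 1).choose 2 + (k + 1) := by
        rw [Nat.choose_succ_succ (k + 1) 1, Nat.choose_one_right]
        exact Nat.add_comm _ _
      have hIH := ih (b + 1) q hqmono hqlb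
      -- rewrite products
      have hprodgoal : ∏ i : Fin (k + 2), f (p i) = f (p 0) * ∏ i : Fin (k + 1), f (p i.succ) :=
        Fin.prod_univ_succ _
      have hprodq : ∏ i : Fin (k + 1), f (q i) =
          (∏ i : Fin k, f (p i.castSucc.succ)) * f (p (Fin.last (k + 1)) + t) := by
        rw [Fin.prod_univ_castSucc]
        congr 1
        · exact Finset.prod_congr rfl fun i _ => by
            rw [hqp, if_neg (Fin.castSucc_lt_last i).ne, add_zero]
        · rw [hqp, if_pos rfl]
          congr 1
      have hprodp : ∏ i : Fin (k + 1), f (p i.succ) =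
          (∏ i : Fin k, f (p i.castSucc.succ)) * f (p (Fin.last (k + 1))) := by
        rw [Fin.prod_univ_castSucc]
        congr 2
      have hrange : ∏ j ∈ Finset.range (k + 1), f (b + j) =
          (∏ j ∈ Finset.range k, f ((b + 1) + j)) * f b := by
        rw [Finset.prod_range_succ']
        simp only [add_zero]
        congr 1
        exact Finset.prod_congr rfl fun j _ => by rw [show b + (j + 1) = b + 1 + j by omega]
      -- sum argument equality
      have hch1 : (k + 1).choose 2 = k.choose 2 + k := by
        rw [Nat.choose_succ_succ k 1, Nat.choose_one_right]; exact Nat.add_comm _ _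
      have hargeq : (∑ i, q i) - ((k + 1 - 1) * (b + 1) + (k + 1 - 1).choose 2) =
          (∑ i, p i) - ((k + 2 - 1) * b + (k + 2 - 1).choose 2) := by
        have hqsumP : (∑ i, q i) + b = ∑ i, p i := by omega
        have hb : k * (b + 1) + k.choose 2 + b = (k + 1) * b + (k + 1).choose 2 := by
          rw [hch1]; ring
        have hmono2 : (k + 1) * b + (k + 1).choose 2 ≤ (k + 2) * b + (k + 2).choose 2 :=
          add_le_add (Nat.mul_le_mul_right b (by omega)) (Nat.choose_le_choose 2 (by omega))
        simp only [show k + 1 - 1 = k by omega, show k + 2 - 1 = k + 1 by omega]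
        omega
      -- pairing step
      have hlast : b ≤ p (Fin.last (k + 1)) := le_trans (Nat.le_add_right _ _) (hlb _)
      have hpair : f b * f (p (Fin.last (k + 1)) + t) ≤ f (p 0) * f (p (Fin.last (k + 1))) := by
        rw [hp0]
        exact pairing t hlast
      calc (∏ j ∈ Finset.range (k + 2 - 1), f (b + j)) *
            f ((∑ i, p i) - ((k + 2 - 1) * b + (k + 2 - 1).choose 2))
          = ((∏ j ∈ Finset.range k, f ((b + 1) + j)) * f b) *
            f ((∑ i, q i) - ((k + 1 - 1) * (b + 1) + (k + 1 - 1).choose 2)) := by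
            simp only [show k + 2 - 1 = k + 1 by omega, show k + 1 - 1 = k by omega] at hargeq ⊢
            rw [← hargeq, hrange]
        _ = f b * ((∏ j ∈ Finset.range k, f ((b + 1) + j)) *
            f ((∑ i, q i) - ((k + 1 - 1) * (b + 1) + (k + 1 - 1).choose 2))) := by ring
        _ ≤ f b * ∏ i : Fin (k + 1), f (q i) := Nat.mul_le_mul_left _ (by
            simpa only [show k + 1 - 1 = k by omega] using hIH)
        _ = (∏ i : Fin k, f (p i.castSucc.succ)) * (f b * f (p (Fin.last (k + 1)) + t)) := by
            rw [hprodq]; ring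
        _ ≤ (∏ i : Fin k, f (p i.castSucc.succ)) * (f (p 0) * f (p (Fin.last (k + 1)))) :=
            Nat.mul_le_mul_left _ hpair
        _ = f (p 0) * ∏ i : Fin (k + 1), f (p i.succ) := by rw [hprodp]; ring
        _ = ∏ i : Fin (k + 2), f (p i) := hprodgoal.symm



lemma le_of_strictMono {n : ℕ} {g : Fin n → ℕ} (hg : StrictMono g) :
    ∀ (v : ℕ) (hv : v < n), v ≤ g ⟨v, hv⟩ := by
  intro v
  induction v with
  | zero => intro hv; exact Nat.zero_le _
  | succ w ih =>
    intro hv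
    have h1 : w < n := by omega
    have h2 := ih h1
    have h3 : g ⟨w, h1⟩ < g ⟨w + 1, hv⟩ := hg (by simp [Fin.lt_iff_val_lt_val])
    omega

lemma le_of_strictMono' {n : ℕ} {g : Fin n → ℕ} (hg : StrictMono g) (i : Fin n) :
    (i : ℕ) ≤ g i := by
  have := le_of_strictMono hg i i.isLt
  simpa using this

lemma div_arith (N D : ℕ) (hN : 0 < N) :
    ((N + 1) * D) / (2 * N) + (N - 1) * (D / (2 * N)) ≤ D := by
  have h2N : 0 < 2 * N := by omega
  set t := D / (2 * N) with ht
  set s := D % (2 * N) with hs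
  have hD : D = 2 * N * t + s := (Nat.div_add_mod D (2 * N)).symm
  have h1 : (N + 1) * D = 2 * N * ((N + 1) * t) + (N + 1) * s := by rw [hD]; ring
  have h2 : ((N + 1) * D) / (2 * N) = (N + 1) * t + ((N + 1) * s) / (2 * N) := by
    rw [h1, Nat.mul_add_div h2N]
  have h3 : ((N + 1) * s) / (2 * N) ≤ s := by
    calc ((N + 1) * s) / (2 * N) ≤ (2 * N * s) / (2 * N) :=
          Nat.div_le_div_right (Nat.mul_le_mul_right s (by omega))
      _ = s := Nat.mul_div_cancel_left s h2N
  have h4 : (N + 1) * t + (N - 1) * t = 2 * N * t := by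
    have h5 : (N + 1) + (N - 1) = 2 * N := by omega
    rw [← add_mul, h5]
  omega

lemma M_le (N D : ℕ) (hN : 2 ≤ N) (hD : D > N ^ 3) :
    (((N + 1) * D) / (2 * N) - (N - 1).choose 2) + ((N - 1) * (D / (2 * N)) + (N - 1).choose 2) ≤ D := by
  have hN0 : 0 < N := by omega
  have hdiv := div_arith N D hN0
  have hC1 : (N - 1).choose 2 ≤ N * N := by
    rw [Nat.choose_two_right]
    have h : (N - 1) * (N - 1 - 1) ≤ N * N := Nat.mul_le_mul (by omega) (by omega)
    omega
  have hC2 : N * N ≤ D / 2 := by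
    have h3 : N ^ 3 = N * N * N := by ring
    have h4 : 2 * (N * N) ≤ N * N * N := by nlinarith
    omega
  have hC3 : D / 2 ≤ ((N + 1) * D) / (2 * N) := by
    have h1 : D / 2 = (N * D) / (N * 2) := (Nat.mul_div_mul_left D 2 hN0).symm
    have h2 : (N * D) / (N * 2) = (N * D) / (2 * N) := by rw [mul_comm N 2]
    have h3 : (N * D) / (2 * N) ≤ ((N + 1) * D) / (2 * N) :=
      Nat.div_le_div_right (Nat.mul_le_mul_right D (by omega))
    omega
  omega


lemma choose_lb (R k : ℕ) : R ^ k ≤ Nat.factorial k * (R + k).choose k := by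
  calc R ^ k ≤ (R + 1) ^ k := Nat.pow_le_pow_left (by omega) k
    _ ≤ (R + 1).ascFactorial k := Nat.pow_succ_le_ascFactorial (R + 1) k
    _ = Nat.factorial k * (R + k).choose k := Nat.ascFactorial_eq_factorial_mul_choose R k


lemma qbar_lb (N R m : ℕ) (hN : 1 ≤ N) (hm : m = R + N.choose 2 + N) :
    (N + R - 1).choose R ≤ Nat.factorial N * qbar N m := by
  classical
  let X := {p : Nat.Partition m // p.parts.Nodup ∧ (p.parts.card = N ∨ p.parts.card = N - 1)}
  -- data from a multiset over Fin N of size R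
  let c : Sym (Fin N) R → Fin N → ℕ := fun s i => Multiset.count i s.1
  have hsumc : ∀ s, ∑ i, c s i = R := by
    intro s
    have h1 : ∑ a ∈ s.1.toFinset, s.1.count a = Multiset.card s.1 :=
      Multiset.toFinset_sum_count_eq s.1
    have h2 : ∑ i : Fin N, s.1.count i = ∑ a ∈ s.1.toFinset, s.1.count a :=
      (Finset.sum_subset (Finset.subset_univ _) (fun x _ hx =>
        Multiset.count_eq_zero_of_notMem (by simpa [Multiset.mem_toFinset] using hx))).symm
    rw [show (∑ i, c s i) = ∑ i : Fin N, s.1.count i from rfl, h2, h1, s.2]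
  let σ : Sym (Fin N) R → Equiv.Perm (Fin N) := fun s => Tuple.sort (c s)
  let g : Sym (Fin N) R → Fin N → ℕ := fun s => c s ∘ σ s
  have hgmono : ∀ s, Monotone (g s) := fun s => Tuple.monotone_sort (c s)
  have hsumg : ∀ s, ∑ i, g s i = R := by
    intro s
    rw [show (∑ i, g s i) = ∑ i, c s (σ s i) from rfl, Equiv.sum_comp (σ s) (c s), hsumc s]
  let e : Sym (Fin N) R → Fin N → ℕ := fun s i => g s i + i + 1
  have hemono : ∀ s, StrictMono (e s) := by
    intro s i j hij
    have h1 : g s i ≤ g s j := hgmono s hij.le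
    have h2 : (i : ℕ) < (j : ℕ) := hij
    show g s i + i + 1 < g s j + j + 1
    omega
  let F : Sym (Fin N) R → Finset ℕ := fun s => Finset.image (e s) Finset.univ
  have hFcard : ∀ s, (F s).card = N := by
    intro s
    rw [Finset.card_image_of_injective _ (hemono s).injective, Finset.card_univ,
      Fintype.card_fin]
  have hFsum : ∀ s, (F s).val.sum = m := by
    intro s
    have h0 : (F s).val.sum = ∑ y ∈ F s, y := by
      show _ = (Multiset.map (fun y => y) (F s).val).sum
      rw [Multiset.map_id']
    have h1 : ∑ y ∈ F s, y = ∑ i, e s i :=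
      Finset.sum_image (fun u _ v _ h => (hemono s).injective h)
    have h2 : ∑ i, e s i = R + N.choose 2 + N := by
      show (∑ i : Fin N, (g s i + i + 1)) = _
      rw [Finset.sum_add_distrib, Finset.sum_add_distrib, hsumg s, sum_fin_id]
      simp
    rw [h0, h1, h2, hm]
  have hFpos : ∀ (s : Sym (Fin N) R) {i : ℕ}, i ∈ (F s).val → 0 < i := by
    intro s i hi
    have h3 : i ∈ F s := hi
    obtain ⟨u, -, rfl⟩ := Finset.mem_image.mp h3
    show 0 < g s u + u + 1
    omega
  let P : Sym (Fin N) R → Nat.Partition m := fun s => ⟨(F s).val, hFpos s, hFsum s⟩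
  have hPcard : ∀ s, (P s).parts.card = N := fun s => hFcard s
  let Φ : Sym (Fin N) R → Equiv.Perm (Fin N) × X := fun s =>
    (σ s, ⟨P s, (F s).nodup, Or.inl (hPcard s)⟩)
  have hΦinj : Function.Injective Φ := by
    intro s t h
    have hσ : σ s = σ t := congrArg Prod.fst h
    have hP : P s = P t := Subtype.ext_iff.mp (congrArg Prod.snd h)
    have hF : F s = F t := Finset.val_injective (congrArg Nat.Partition.parts hP)
    have he : e s = e t := by
      have h1 : ∀ i, e s i ∈ F s := fun i => Finset.mem_image_of_mem _ (Finset.mem_univ i)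
      have h2 : ∀ i, e t i ∈ F s := fun i => hF ▸ Finset.mem_image_of_mem _ (Finset.mem_univ i)
      rw [Finset.orderEmbOfFin_unique (hFcard s) h1 (hemono s),
        Finset.orderEmbOfFin_unique (hFcard s) h2 (hemono t)]
    have hg : g s = g t := by
      funext i
      have h3 := congrFun he i
      have h4 : g s i + i + 1 = g t i + i + 1 := h3
      omega
    have hc : c s = c t := by
      funext i
      have h5 : c s (σ t ((σ t)⁻¹ i)) = c t (σ t ((σ t)⁻¹ i)) := by
        have h7 := congrFun hg ((σ t)⁻¹ i)
        rw [show g s = c s ∘ σ s from rfl, show g t = c t ∘ σ t from rfl] at h7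
        rw [hσ] at h7
        exact h7
      simpa using h5
    apply Subtype.ext
    apply Multiset.ext.mpr
    intro a
    exact congrFun hc a
  calc (N + R - 1).choose R = Fintype.card (Sym (Fin N) R) := by
        rw [Sym.card_sym_eq_choose, Fintype.card_fin]
    _ ≤ Fintype.card (Equiv.Perm (Fin N) × X) := Fintype.card_le_of_injective Φ hΦinj
    _ = Nat.factorial N * qbar N m := by
        rw [Fintype.card_prod, Fintype.card_perm, Fintype.card_fin]
        rfl

lemma tendsto_aux (a k c : ℕ) (hk : 0 < k) :
    Tendsto (fun D : ℕ => (((a * D) / k - c : ℕ) : ℝ) / D) atTop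
      (nhds ((a : ℝ) / k)) := by
  have hk0 : (0:ℝ) < k := by exact_mod_cast hk
  have hupper : ∀ D : ℕ, (((a * D) / k - c : ℕ) : ℝ) / D ≤ (a : ℝ) / k := by
    intro D
    rcases Nat.eq_zero_or_pos D with hD | hD
    · subst hD; simp; positivity
    have hD0 : (0:ℝ) < D := by exact_mod_cast hD
    rw [div_le_div_iff₀ hD0 hk0]
    have h1 : (((a * D) / k - c : ℕ) : ℝ) ≤ ((a * D) / k : ℕ) := by
      exact_mod_cast Nat.sub_le _ _
    have h2 : (((a * D) / k : ℕ) : ℝ) ≤ (a * D : ℝ) / k := by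
      exact_mod_cast Nat.cast_div_le
    have h3 : (((a * D) / k : ℕ) : ℝ) * k ≤ (a : ℝ) * D := by
      rw [← le_div_iff₀ hk0]
      exact_mod_cast h2
    calc (((a * D) / k - c : ℕ) : ℝ) * k ≤ (((a * D) / k : ℕ) : ℝ) * k := by
          apply mul_le_mul_of_nonneg_right h1 hk0.le
      _ ≤ (a : ℝ) * D := h3
  have hlower : ∀ D : ℕ, 1 ≤ D →
      (a : ℝ) / k - (1 + c) / D ≤ (((a * D) / k - c : ℕ) : ℝ) / D := by
    intro D hD
    have hD0 : (0:ℝ) < D := by exact_mod_cast hD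
    set q := (a * D) / k with hq
    set r := (a * D) % k with hr
    have hqr : k * q + r = a * D := Nat.div_add_mod _ _
    have hrk : r < k := Nat.mod_lt _ hk
    have hcq : (((q - c : ℕ)) : ℝ) ≥ (q : ℝ) - c := by
      rcases le_total c q with h | h
      · rw [Nat.cast_sub h]
      · have : q - c = 0 := by omega
        rw [this]
        have : (q:ℝ) ≤ (c:ℝ) := by exact_mod_cast h
        simp
        linarith
    have hkq : (k : ℝ) * q ≥ (a:ℝ) * D - k := by
      have : (k:ℝ) * q + r = (a:ℝ) * D := by exact_mod_cast hqr
      have hr0 : (r:ℝ) ≤ (k:ℝ) := by exact_mod_cast hrk.le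
      linarith
    have key : (a:ℝ)/k ≤ (((q - c : ℕ)):ℝ) / D + (1 + c)/D := by
      rw [← add_div, div_le_div_iff₀ hk0 hD0]
      have expand : ((((q - c : ℕ)):ℝ) + (1 + c)) * k ≥ ((q:ℝ) + 1) * k := by
        have h5 : (((q - c : ℕ)):ℝ) + (1 + c) ≥ (q:ℝ) + 1 := by linarith
        apply mul_le_mul_of_nonneg_right h5 hk0.le
      have h6 : ((q:ℝ) + 1) * k = (k:ℝ) * q + k := by ring
      nlinarith
    linarith
  apply tendsto_of_tendsto_of_tendsto_of_le_of_le'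
    (g := fun D : ℕ => (a : ℝ) / k - (1 + c) / D) (h := fun _ : ℕ => (a : ℝ) / k)
  · have h7 := tendsto_const_div_atTop_nhds_zero_nat (1 + (c:ℝ))
    have h8 : Tendsto (fun D : ℕ => (a : ℝ) / k - (1 + c) / D) atTop
        (nhds ((a:ℝ)/k - 0)) := Tendsto.sub tendsto_const_nhds h7
    simpa using h8
  · exact tendsto_const_nhds
  · filter_upwards [eventually_ge_atTop 1] with D hD
    exact hlower D hD
  · filter_upwards with D
    exact hupper D

lemma factorial_le_stirling (n : ℕ) (hn : 1 ≤ n) :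
    (Nat.factorial n : ℝ) ≤ Real.exp 1 * Real.sqrt n * ((n : ℝ) / Real.exp 1) ^ n := by
  have h1 : Stirling.stirlingSeq n ≤ Stirling.stirlingSeq 1 := by
    have h2 := Stirling.stirlingSeq'_antitone (Nat.zero_le (n - 1))
    simpa [Nat.succ_eq_add_one, Nat.sub_add_cancel hn] using h2
  rw [Stirling.stirlingSeq_one] at h1
  have hn0 : (0:ℝ) < n := by exact_mod_cast hn
  have hden : (0:ℝ) < Real.sqrt (2 * n) * ((n : ℝ) / Real.exp 1) ^ n := by positivity
  have h3 : (Nat.factorial n : ℝ) ≤ (Real.exp 1 / Real.sqrt 2) *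
      (Real.sqrt (2 * n) * ((n : ℝ) / Real.exp 1) ^ n) := by
    have := (div_le_iff₀ hden).mp h1
    exact this
  have h4 : Real.sqrt (2 * (n:ℝ)) = Real.sqrt 2 * Real.sqrt n := Real.sqrt_mul (by norm_num) _
  have hs2 : (0:ℝ) < Real.sqrt 2 := Real.sqrt_pos.mpr (by norm_num)
  calc (Nat.factorial n : ℝ) ≤ (Real.exp 1 / Real.sqrt 2) *
        (Real.sqrt (2 * n) * ((n : ℝ) / Real.exp 1) ^ n) := h3
    _ = Real.exp 1 * Real.sqrt n * ((n : ℝ) / Real.exp 1) ^ n := by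
        rw [h4]
        field_simp

lemma key_ineq (N : ℕ) (hN : 2 ≤ N) :
    Real.exp 1 ^ (2 * N - 1) * ((Nat.factorial N : ℝ) * (Nat.factorial (N - 1) : ℝ)) ≤
      2 * Real.pi * (N : ℝ) ^ (2 * N - 2) * ((N : ℝ) + 1) ^ 2 := by
  have hn2 : (2 : ℝ) ≤ (N : ℝ) := by exact_mod_cast hN
  have hn0 : (0 : ℝ) < (N : ℝ) := by linarith
  have hcast : ((N - 1 : ℕ) : ℝ) = (N : ℝ) - 1 := by
    push_cast [Nat.cast_sub (by omega : 1 ≤ N)]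
    ring
  set n : ℝ := (N : ℝ) with hn
  have hfN : (Nat.factorial N : ℝ) ≤ Real.exp 1 * Real.sqrt n * (n / Real.exp 1) ^ N :=
    factorial_le_stirling N (by omega)
  have hfN1 : (Nat.factorial (N - 1) : ℝ) ≤
      Real.exp 1 * Real.sqrt (n - 1) * ((n - 1) / Real.exp 1) ^ (N - 1) := by
    have := factorial_le_stirling (N - 1) (by omega)
    rwa [hcast] at this
  have hexp : (0 : ℝ) < Real.exp 1 := Real.exp_pos 1
  -- geometric bound : (n-1)^(N-1) ≤ 2 * exp(-1) * n^(N-1)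
  have hgeo : (n - 1) ^ (N - 1) ≤ 2 * (Real.exp 1)⁻¹ * n ^ (N - 1) := by
    have h1 : n - 1 ≤ n * Real.exp (-1 / n) := by
      have h0 := Real.add_one_le_exp (-1 / n)
      have h2 : n * (-1 / n + 1) ≤ n * Real.exp (-1 / n) :=
        mul_le_mul_of_nonneg_left h0 hn0.le
      have h3 : n * (-1 / n + 1) = n - 1 := by field_simp; ring
      linarith
    have h2 : (n - 1) ^ N ≤ (n * Real.exp (-1 / n)) ^ N :=
      pow_le_pow_left₀ (by linarith) h1 N
    have h3 : (n * Real.exp (-1 / n)) ^ N = n ^ N * Real.exp (-1) := by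
      rw [mul_pow, ← Real.exp_nat_mul]
      congr 2
      field_simp
      simp [hn]
    have h4 : (n - 1) ^ N = (n - 1) ^ (N - 1) * (n - 1) := by
      rw [← pow_succ]
      congr 1
      omega
    have h5 : n ^ N = n ^ (N - 1) * n := by
      rw [← pow_succ]
      congr 1
      omega
    have h6 : (n - 1) ^ (N - 1) * (n - 1) ≤ (n ^ (N - 1) * n) * Real.exp (-1) := by
      rw [← h4, ← h5]
      calc (n - 1) ^ N ≤ (n * Real.exp (-1 / n)) ^ N := h2
        _ = n ^ N * Real.exp (-1) := h3
    have hA : (0 : ℝ) ≤ (n - 1) ^ (N - 1) := pow_nonneg (by linarith) _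
    have hB : (0 : ℝ) < n ^ (N - 1) := by positivity
    have hE : Real.exp (-1) = (Real.exp 1)⁻¹ := by
      rw [← Real.exp_neg]
    have hnn : n ≤ 2 * (n - 1) := by linarith
    rw [hE] at h6
    have hEpos : (0 : ℝ) < (Real.exp 1)⁻¹ := by positivity
    nlinarith [mul_le_mul_of_nonneg_right hnn (mul_pos hB hEpos).le]
  -- sqrt bound
  have hsq : Real.sqrt n * Real.sqrt (n - 1) ≤ n := by
    have h1 : Real.sqrt (n - 1) ≤ Real.sqrt n := Real.sqrt_le_sqrt (by linarith)
    have h2 : Real.sqrt n * Real.sqrt n = n := Real.mul_self_sqrt hn0.le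
    nlinarith [Real.sqrt_nonneg n, Real.sqrt_nonneg (n - 1)]
  -- step 2 equality
  have hsplit : Real.exp 1 ^ (2 * N - 1) = Real.exp 1 ^ N * Real.exp 1 ^ (N - 1) := by
    rw [← pow_add]
    congr 1
    omega
  have hstep2 : Real.exp 1 ^ (2 * N - 1) *
      ((Real.exp 1 * Real.sqrt n * (n / Real.exp 1) ^ N) *
        (Real.exp 1 * Real.sqrt (n - 1) * ((n - 1) / Real.exp 1) ^ (N - 1))) =
      Real.exp 1 ^ 2 * (Real.sqrt n * Real.sqrt (n - 1)) * (n ^ N * (n - 1) ^ (N - 1)) := by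
    rw [hsplit, div_pow, div_pow]
    have e1 : Real.exp 1 ^ N ≠ 0 := by positivity
    have e2 : Real.exp 1 ^ (N - 1) ≠ 0 := by positivity
    field_simp
  -- chain
  have hfprod : (Nat.factorial N : ℝ) * (Nat.factorial (N - 1) : ℝ) ≤
      (Real.exp 1 * Real.sqrt n * (n / Real.exp 1) ^ N) *
        (Real.exp 1 * Real.sqrt (n - 1) * ((n - 1) / Real.exp 1) ^ (N - 1)) := by
    apply mul_le_mul hfN hfN1 (by positivity) (by positivity)
  have hKpos : (0 : ℝ) < Real.exp 1 ^ (2 * N - 1) := by positivity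
  have step1 : Real.exp 1 ^ (2 * N - 1) * ((Nat.factorial N : ℝ) * (Nat.factorial (N - 1) : ℝ))
      ≤ Real.exp 1 ^ 2 * (Real.sqrt n * Real.sqrt (n - 1)) * (n ^ N * (n - 1) ^ (N - 1)) := by
    rw [← hstep2]
    exact mul_le_mul_of_nonneg_left hfprod hKpos.le
  -- bound the RHS of step1 by 2 * e * n^(2N)
  have hpowN : (0 : ℝ) < n ^ N := by positivity
  have step3 : Real.exp 1 ^ 2 * (Real.sqrt n * Real.sqrt (n - 1)) * (n ^ N * (n - 1) ^ (N - 1))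
      ≤ Real.exp 1 ^ 2 * n * (n ^ N * (2 * (Real.exp 1)⁻¹ * n ^ (N - 1))) := by
    have h1 : n ^ N * (n - 1) ^ (N - 1) ≤ n ^ N * (2 * (Real.exp 1)⁻¹ * n ^ (N - 1)) :=
      mul_le_mul_of_nonneg_left hgeo hpowN.le
    have h2 : Real.exp 1 ^ 2 * (Real.sqrt n * Real.sqrt (n - 1)) ≤ Real.exp 1 ^ 2 * n :=
      mul_le_mul_of_nonneg_left hsq (by positivity)
    apply mul_le_mul h2 h1
      (mul_nonneg hpowN.le (pow_nonneg (by linarith) _)) (by positivity)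
  have step4 : Real.exp 1 ^ 2 * n * (n ^ N * (2 * (Real.exp 1)⁻¹ * n ^ (N - 1))) =
      2 * Real.exp 1 * n ^ (2 * N) := by
    have h1 : n * (n ^ N * n ^ (N - 1)) = n ^ (2 * N) := by
      rw [← pow_add, ← pow_succ']
      congr 1
      omega
    have h2 : Real.exp 1 ^ 2 * (Real.exp 1)⁻¹ = Real.exp 1 := by
      rw [sq, mul_assoc, mul_inv_cancel₀ (ne_of_gt hexp), mul_one]
    calc Real.exp 1 ^ 2 * n * (n ^ N * (2 * (Real.exp 1)⁻¹ * n ^ (N - 1)))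
        = (Real.exp 1 ^ 2 * (Real.exp 1)⁻¹) * 2 * (n * (n ^ N * n ^ (N - 1))) := by ring
      _ = 2 * Real.exp 1 * n ^ (2 * N) := by rw [h1, h2]; ring
  have step5 : 2 * Real.exp 1 * n ^ (2 * N) ≤ 2 * Real.pi * n ^ (2 * N - 2) * (n + 1) ^ 2 := by
    have h1 : n ^ (2 * N) = n ^ (2 * N - 2) * n ^ 2 := by
      rw [← pow_add]
      congr 1
      omega
    have hepi : Real.exp 1 ≤ Real.pi := by
      have h2 : Real.exp 1 < 2.7182818286 := Real.exp_one_lt_d9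
      have h3 : (3.141592 : ℝ) < Real.pi := Real.pi_gt_d6
      linarith
    have h4 : n ^ 2 ≤ (n + 1) ^ 2 := by nlinarith
    have h5 : (0 : ℝ) ≤ n ^ (2 * N - 2) := by positivity
    rw [h1]
    calc 2 * Real.exp 1 * (n ^ (2 * N - 2) * n ^ 2)
        = 2 * (n ^ (2 * N - 2)) * (Real.exp 1 * n ^ 2) := by ring
      _ ≤ 2 * (n ^ (2 * N - 2)) * (Real.pi * (n + 1) ^ 2) := by
          apply mul_le_mul_of_nonneg_left _ (by positivity)
          apply mul_le_mul hepi h4 (by positivity) (by positivity)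
      _ = 2 * Real.pi * n ^ (2 * N - 2) * (n + 1) ^ 2 := by ring
  calc Real.exp 1 ^ (2 * N - 1) * ((Nat.factorial N : ℝ) * (Nat.factorial (N - 1) : ℝ))
      ≤ Real.exp 1 ^ 2 * (Real.sqrt n * Real.sqrt (n - 1)) * (n ^ N * (n - 1) ^ (N - 1)) := step1
    _ ≤ Real.exp 1 ^ 2 * n * (n ^ N * (2 * (Real.exp 1)⁻¹ * n ^ (N - 1))) := step3
    _ = 2 * Real.exp 1 * n ^ (2 * N) := step4
    _ ≤ 2 * Real.pi * n ^ (2 * N - 2) * (n + 1) ^ 2 := step5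

open scoped Classical in
set_option maxHeartbeats 2000000 in
lemma part1 (N D : ℕ) (hN : 2 ≤ N) (hD : D > N ^ 3) :
    qbar N (D / 2) *
        ((((N + 1) * D) / (2 * N) - (N - 1).choose 2 + 2).choose 2 *
          ∏ j ∈ Finset.range (N - 1), (j + D / (2 * N) + 2).choose 2) ≤
      targetDim N D := by
  have hN0 : 0 < N := by omega
  let X := {p : Nat.Partition (D / 2) // p.parts.Nodup ∧
    (p.parts.card = N ∨ p.parts.card = N - 1)}
  let S0 : X → Finset ℕ := fun x => ⟨x.1.parts, x.2.1⟩
  have h0 : ∀ x : X, 0 ∉ S0 x := by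
    intro x hx
    exact absurd (x.1.parts_pos hx) (lt_irrefl 0)
  let S : X → Finset ℕ := fun x => if x.1.parts.card = N then S0 x else insert 0 (S0 x)
  have hScard : ∀ x : X, (S x).card = N := by
    intro x
    by_cases h : x.1.parts.card = N
    · simp only [S, if_pos h]; exact h
    · have h2 : x.1.parts.card = N - 1 := x.2.2.resolve_left h
      simp only [S, if_neg h]
      rw [Finset.card_insert_of_notMem (h0 x)]
      show Multiset.card x.1.parts + 1 = N
      omega
  let a : (x : X) → Fin N ↪o ℕ := fun x => (S x).orderEmbOfFin (hScard x)
  have haS : ∀ x : X, Finset.univ.image (a x) = S x := by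
    intro x
    apply Finset.coe_injective
    rw [Finset.coe_image, Finset.coe_univ, Set.image_univ, Finset.range_orderEmbOfFin]
  have hasum : ∀ x : X, ∑ i, a x i = D / 2 := by
    intro x
    have h1 : ∑ y ∈ Finset.univ.image (a x), y = ∑ i, a x i :=
      Finset.sum_image (fun u _ v _ h => (a x).injective h)
    rw [← h1, haS x]
    have h2 : ∑ y ∈ S0 x, y = D / 2 := by
      have h3 : ∑ y ∈ S0 x, y = x.1.parts.sum := by
        show (Multiset.map (fun y => y) x.1.parts).sum = x.1.parts.sum
        rw [Multiset.map_id']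
      rw [h3, x.1.parts_sum]
    by_cases h : x.1.parts.card = N
    · simp only [S, if_pos h]; exact h2
    · simp only [S, if_neg h]
      rw [Finset.sum_insert (h0 x)]
      omega
  let qv := (D - D / 2) / N
  let rv := (D - D / 2) % N
  let lastI : Fin N := ⟨N - 1, by omega⟩
  let Ψ : X → Fin N → ℕ := fun x i => a x i + qv + if i = lastI then rv else 0
  have hΨdef : ∀ x i, Ψ x i = a x i + qv + if i = lastI then rv else 0 := fun x i => rfl
  have hql : D / (2 * N) ≤ qv := by
    have h1 : D / 2 ≤ D - D / 2 := by omega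
    have h2 : D / (2 * N) = D / 2 / N := by rw [Nat.div_div_eq_div_mul]
    rw [h2]
    exact Nat.div_le_div_right h1
  have hΨmono : ∀ x : X, StrictMono (Ψ x) := by
    intro x i j hij
    have hi : i ≠ lastI := by
      intro he
      have h1 : (i : ℕ) < (j : ℕ) := hij
      have h2 : (j : ℕ) < N := j.isLt
      have h3 : (i : ℕ) = N - 1 := by rw [he]
      omega
    have h4 : a x i < a x j := (a x).strictMono hij
    rw [hΨdef, hΨdef, if_neg hi]
    split <;> omega
  have hΨlb : ∀ (x : X) (i : Fin N), D / (2 * N) + (i : ℕ) ≤ Ψ x i := by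
    intro x i
    have h1 : (i : ℕ) ≤ a x i := le_of_strictMono' (a x).strictMono i
    rw [hΨdef]
    split <;> omega
  have hΨsum : ∀ x : X, ∑ i, Ψ x i = D := by
    intro x
    have h1 : ∑ i, Ψ x i = (∑ i, a x i) + (∑ _i : Fin N, qv) +
        (∑ i, if i = lastI then rv else 0) := by
      show ∑ i, (a x i + qv + if i = lastI then rv else 0) = _
      rw [Finset.sum_add_distrib, Finset.sum_add_distrib]
    have h2 : (∑ _i : Fin N, qv) = N * qv := by
      rw [Finset.sum_const, Finset.card_univ, Fintype.card_fin, smul_eq_mul]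
    have h3 : (∑ i, if i = lastI then rv else 0) = rv := by
      rw [Finset.sum_ite_eq' Finset.univ lastI (fun _ => rv), if_pos (Finset.mem_univ _)]
    have h4 : N * qv + rv = D - D / 2 := Nat.div_add_mod (D - D / 2) N
    rw [h1, h2, h3, hasum x]
    omega
  have hΨub : ∀ (x : X) (i : Fin N), Ψ x i ≤ D := by
    intro x i
    have h1 : Ψ x i ≤ ∑ j, Ψ x j :=
      Finset.single_le_sum (fun j _ => Nat.zero_le (Ψ x j)) (Finset.mem_univ i)
    rw [hΨsum x] at h1
    exact h1
  have hinj : Function.Injective Ψ := by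
    intro x y h
    have ha : ∀ i, a x i = a y i := by
      intro i
      have h1 := congrFun h i
      rw [hΨdef, hΨdef] at h1
      split at h1 <;> omega
    have hSeq : S x = S y := by
      rw [← haS x, ← haS y]
      exact Finset.image_congr (fun u _ => ha u)
    have hpeq : x.1.parts = y.1.parts := by
      have e1 : S0 x = (S x).erase 0 := by
        by_cases hc : x.1.parts.card = N
        · simp only [S, if_pos hc]; exact (Finset.erase_eq_of_notMem (h0 x)).symm
        · simp only [S, if_neg hc]; exact (Finset.erase_insert (h0 x)).symm
      have e2 : S0 y = (S y).erase 0 := by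
        by_cases hc : y.1.parts.card = N
        · simp only [S, if_pos hc]; exact (Finset.erase_eq_of_notMem (h0 y)).symm
        · simp only [S, if_neg hc]; exact (Finset.erase_insert (h0 y)).symm
      have e3 : S0 x = S0 y := by rw [e1, e2, hSeq]
      exact congrArg Finset.val e3
    exact Subtype.ext (Nat.Partition.ext hpeq)
  have hprod : ∀ x : X,
      (((N + 1) * D) / (2 * N) - (N - 1).choose 2 + 2).choose 2 *
        ∏ j ∈ Finset.range (N - 1), (j + D / (2 * N) + 2).choose 2 ≤
      ∏ i, f (Ψ x i) := by
    intro x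
    have h1 := prod_f_ge N (D / (2 * N)) (Ψ x) (hΨmono x) (hΨlb x)
    rw [hΨsum x] at h1
    have h2 : f (((N + 1) * D) / (2 * N) - (N - 1).choose 2) ≤
        f (D - ((N - 1) * (D / (2 * N)) + (N - 1).choose 2)) := by
      apply f_mono
      have := M_le N D hN hD
      omega
    have h3 : (∏ j ∈ Finset.range (N - 1), (j + D / (2 * N) + 2).choose 2) =
        ∏ j ∈ Finset.range (N - 1), f (D / (2 * N) + j) := by
      refine Finset.prod_congr rfl fun j _ => ?_
      show (j + D / (2 * N) + 2).choose 2 = (D / (2 * N) + j + 2).choose 2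
      rw [Nat.add_comm j]
    calc (((N + 1) * D) / (2 * N) - (N - 1).choose 2 + 2).choose 2 *
          ∏ j ∈ Finset.range (N - 1), (j + D / (2 * N) + 2).choose 2
        = f (((N + 1) * D) / (2 * N) - (N - 1).choose 2) *
          ∏ j ∈ Finset.range (N - 1), f (D / (2 * N) + j) := by rw [h3]; rfl
      _ ≤ f (D - ((N - 1) * (D / (2 * N)) + (N - 1).choose 2)) *
          ∏ j ∈ Finset.range (N - 1), f (D / (2 * N) + j) :=
          Nat.mul_le_mul_right _ h2
      _ = (∏ j ∈ Finset.range (N - 1), f (D / (2 * N) + j)) *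
          f (D - ((N - 1) * (D / (2 * N)) + (N - 1).choose 2)) := mul_comm _ _
      _ ≤ ∏ i, f (Ψ x i) := h1
  -- now package into tuples of Fin (D+1)
  let Ψ' : X → Fin N → Fin (D + 1) := fun x i => ⟨Ψ x i, by
    have := hΨub x i; omega⟩
  have hΨ'val : ∀ x i, ((Ψ' x i : ℕ)) = Ψ x i := fun x i => rfl
  have hinj' : Function.Injective Ψ' := by
    intro x y h
    apply hinj
    funext i
    have := congrFun h i
    exact congrArg Fin.val this
  have hsub : Finset.univ.image Ψ' ⊆ Finset.univ.filter
      (fun p : Fin N → Fin (D + 1) => StrictMono p ∧ ∑ i, (p i : ℕ) = D) := by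
    intro p hp
    obtain ⟨x, -, rfl⟩ := Finset.mem_image.mp hp
    refine Finset.mem_filter.mpr ⟨Finset.mem_univ _, ?_, ?_⟩
    · intro i j hij
      show (Ψ' x i : ℕ) < (Ψ' x j : ℕ)
      exact hΨmono x hij
    · exact hΨsum x
  have hq : qbar N (D / 2) = Fintype.card X := rfl
  calc qbar N (D / 2) *
        ((((N + 1) * D) / (2 * N) - (N - 1).choose 2 + 2).choose 2 *
          ∏ j ∈ Finset.range (N - 1), (j + D / (2 * N) + 2).choose 2)
      = ∑ _x : X, ((((N + 1) * D) / (2 * N) - (N - 1).choose 2 + 2).choose 2 *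
          ∏ j ∈ Finset.range (N - 1), (j + D / (2 * N) + 2).choose 2) := by
        rw [Finset.sum_const, Finset.card_univ, smul_eq_mul, hq]
    _ ≤ ∑ x : X, ∏ i, f (Ψ x i) := Finset.sum_le_sum fun x _ => hprod x
    _ = ∑ p ∈ Finset.univ.image Ψ', ∏ i, ((p i : ℕ) + 2).choose 2 := by
        rw [Finset.sum_image (fun x _ y _ h => hinj' h)]
        rfl
    _ ≤ targetDim N D := by
        unfold targetDim
        exact Finset.sum_le_sum_of_subset hsub

set_option maxHeartbeats 1000000 in
lemma nat_master (N D : ℕ) (hN : 2 ≤ N) (hD : D > N ^ 3) :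
    (D / 2 - (N.choose 2 + N)) ^ (N - 1) *
      (((((N + 1) * D) / (2 * N) - (N - 1).choose 2) ^ 2) * (D / (2 * N)) ^ (2 * N - 2)) ≤
    (2 ^ N * (Nat.factorial N * Nat.factorial (N - 1))) * targetDim N D := by
  set R := D / 2 - (N.choose 2 + N) with hR
  set M := ((N + 1) * D) / (2 * N) - (N - 1).choose 2 with hM
  set b := D / (2 * N) with hb
  set Q := qbar N (D / 2) with hQ
  set P := ∏ j ∈ Finset.range (N - 1), (j + D / (2 * N) + 2).choose 2 with hP
  -- step 1: R ^ (N-1) ≤ (N-1)! * (N! * Q)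
  have hchoose2 : N.choose 2 * 2 = N * (N - 1) := by
    rw [Nat.choose_two_right]
    exact Nat.div_mul_cancel (by
      have h := Nat.even_mul_succ_self (N - 1)
      have h2 : (N - 1) * (N - 1 + 1) = N * (N - 1) := by
        rw [Nat.sub_add_cancel (by omega)]; ring
      rw [h2] at h
      exact h.two_dvd)
  have hNN : N * (N - 1) + 2 * N ≤ N ^ 3 := by
    have h3 : N ^ 3 = N * N * N := by ring
    have h5 : N * (N - 1) + N = N * N := by
      rw [← Nat.mul_succ]
      congr 1
      omega
    have h6 : N * N + N ≤ N * N * N := by nlinarith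
    omega
  have hm : D / 2 = R + N.choose 2 + N := by
    rw [hR]; omega
  have h1 : R ^ (N - 1) ≤ Nat.factorial (N - 1) * (Nat.factorial N * Q) := by
    have hq := qbar_lb N R (D / 2) (by omega) hm
    have hc := choose_lb R (N - 1)
    have e1 : R + (N - 1) = N + R - 1 := by omega
    have e3 : N + R - 1 - R = N - 1 := by omega
    have e2 : (N + R - 1).choose (N - 1) = (N + R - 1).choose R := by
      rw [← e3, Nat.choose_symm (by omega)]
    rw [e1, e2] at hc
    calc R ^ (N - 1) ≤ Nat.factorial (N - 1) * (N + R - 1).choose R := hc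
      _ ≤ Nat.factorial (N - 1) * (Nat.factorial N * Q) := Nat.mul_le_mul_left _ hq
  -- step 2 : M^2 ≤ 2 * f M
  have h2 : M ^ 2 ≤ 2 * f M := by
    have := two_mul_f M
    nlinarith
  -- step 3 : b^(2N-2) ≤ 2^(N-1) * P
  have h3 : b ^ (2 * N - 2) ≤ 2 ^ (N - 1) * P := by
    have e1 : b ^ (2 * N - 2) = (b ^ 2) ^ (N - 1) := by
      rw [← pow_mul]
      congr 1
      omega
    have e2 : b ^ 2 ≤ 2 * f b := by
      have := two_mul_f b
      nlinarith
    have e3 : (b ^ 2) ^ (N - 1) ≤ (2 * f b) ^ (N - 1) := Nat.pow_le_pow_left e2 _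
    have e4 : (2 * f b) ^ (N - 1) = 2 ^ (N - 1) * (f b) ^ (N - 1) := mul_pow _ _ _
    have e5 : (f b) ^ (N - 1) = ∏ _j ∈ Finset.range (N - 1), f b := by
      rw [Finset.prod_const, Finset.card_range]
    have e6 : (∏ _j ∈ Finset.range (N - 1), f b) ≤ P := by
      rw [hP]
      apply Finset.prod_le_prod'
      intro j _
      show f b ≤ (j + b + 2).choose 2
      have : (j + b + 2).choose 2 = f (j + b) := by rw [show j + b = b + j by omega]; rfl
      rw [this]
      exact f_mono (by omega)
    calc b ^ (2 * N - 2) = (b ^ 2) ^ (N - 1) := e1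
      _ ≤ (2 * f b) ^ (N - 1) := e3
      _ = 2 ^ (N - 1) * (f b) ^ (N - 1) := e4
      _ ≤ 2 ^ (N - 1) * P := by rw [e5]; exact Nat.mul_le_mul_left _ e6
  have hfM : (M + 2).choose 2 = f M := rfl
  have hpart := part1 N D hN hD
  rw [hfM] at hpart
  have h4 : R ^ (N - 1) * (M ^ 2 * b ^ (2 * N - 2)) ≤
      (Nat.factorial (N - 1) * (Nat.factorial N * Q)) * ((2 * f M) * (2 ^ (N - 1) * P)) :=
    Nat.mul_le_mul h1 (Nat.mul_le_mul h2 h3)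
  have h5 : (Nat.factorial (N - 1) * (Nat.factorial N * Q)) * ((2 * f M) * (2 ^ (N - 1) * P)) =
      (2 ^ N * (Nat.factorial N * Nat.factorial (N - 1))) * (Q * (f M * P)) := by
    have e7 : 2 * 2 ^ (N - 1) = 2 ^ N := by
      rw [← pow_succ']
      congr 1
      omega
    rw [← e7]
    ring
  have h6 : (2 ^ N * (Nat.factorial N * Nat.factorial (N - 1))) * (Q * (f M * P)) ≤
      (2 ^ N * (Nat.factorial N * Nat.factorial (N - 1))) * targetDim N D :=
    Nat.mul_le_mul_left _ hpart
  exact le_trans (le_trans h4 (le_of_eq h5)) h6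

lemma S_le_C1 (N : ℕ) (hN : 2 ≤ N) :
    Real.exp (2 * (N : ℝ) - 1) / (Real.pi * 2 ^ (4 * N) * (N : ℝ) ^ (4 * N - 2)) ≤
      ((1 : ℝ) / 2) ^ (N - 1) *
        ((((N : ℝ) + 1) / (2 * (N : ℝ))) ^ 2 * ((1 : ℝ) / (2 * (N : ℝ))) ^ (2 * N - 2)) /
        ((2 : ℝ) ^ N * ((Nat.factorial N : ℝ) * (Nat.factorial (N - 1) : ℝ))) := by
  have hn2 : (2 : ℝ) ≤ (N : ℝ) := by exact_mod_cast hN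
  have hn0 : (0 : ℝ) < (N : ℝ) := by linarith
  have hF : (0 : ℝ) < (Nat.factorial N : ℝ) * (Nat.factorial (N - 1) : ℝ) := by
    have := Nat.factorial_pos N
    have := Nat.factorial_pos (N - 1)
    positivity
  have hW : (0 : ℝ) < Real.pi * 2 ^ (4 * N) * (N : ℝ) ^ (4 * N - 2) := by
    have := Real.pi_pos
    positivity
  rw [div_le_iff₀ hW]
  have hE : Real.exp (2 * (N : ℝ) - 1) = Real.exp 1 ^ (2 * N - 1) := by
    rw [Real.exp_one_pow]
    congr 1
    push_cast [Nat.cast_sub (by omega : 1 ≤ 2 * N)]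
    ring
  have h2pow : (2 : ℝ) ^ (4 * N) =
      2 ^ (N - 1) * 2 ^ 2 * 2 ^ (2 * N - 2) * 2 ^ N * 2 ^ 1 := by
    rw [← pow_add, ← pow_add, ← pow_add, ← pow_add]
    congr 1
    omega
  have hnpow : (N : ℝ) ^ (4 * N - 2) = (N : ℝ) ^ 2 * (N : ℝ) ^ (2 * N - 2) *
      (N : ℝ) ^ (2 * N - 2) := by
    rw [← pow_add, ← pow_add]
    congr 1
    omega
  have hid : ((1 : ℝ) / 2) ^ (N - 1) *
        ((((N : ℝ) + 1) / (2 * (N : ℝ))) ^ 2 * ((1 : ℝ) / (2 * (N : ℝ))) ^ (2 * N - 2)) /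
        ((2 : ℝ) ^ N * ((Nat.factorial N : ℝ) * (Nat.factorial (N - 1) : ℝ))) *
        (Real.pi * 2 ^ (4 * N) * (N : ℝ) ^ (4 * N - 2)) =
      (2 * Real.pi * (N : ℝ) ^ (2 * N - 2) * ((N : ℝ) + 1) ^ 2) /
        ((Nat.factorial N : ℝ) * (Nat.factorial (N - 1) : ℝ)) := by
    rw [h2pow, hnpow]
    rw [div_pow, div_pow, div_pow, mul_pow, mul_pow, one_pow, one_pow]
    have hne1 : ((2:ℝ) ^ (N - 1)) ≠ 0 := by positivity
    have hne2 : ((2:ℝ) ^ (2 * N - 2)) ≠ 0 := by positivity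
    have hne3 : ((2:ℝ) ^ N) ≠ 0 := by positivity
    have hne4 : ((N:ℝ) ^ (2 * N - 2)) ≠ 0 := by positivity
    have hne5 : ((N:ℝ) ^ 2) ≠ 0 := by positivity
    have hne6 : ((Nat.factorial N : ℝ) * (Nat.factorial (N - 1) : ℝ)) ≠ 0 := ne_of_gt hF
    field_simp
  rw [hE, hid, le_div_iff₀ hF]
  exact key_ineq N hN

lemma part2 (N : ℕ) (hN : 2 ≤ N) (c : ℝ)
    (hc : c < Real.exp (2 * (N : ℝ) - 1) / (Real.pi * 2 ^ (4 * N) * (N : ℝ) ^ (4 * N - 2))) :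
    ∃ D₀ : ℕ, ∀ D : ℕ, D ≥ D₀ → c * (D : ℝ) ^ (3 * N - 1) ≤ (targetDim N D : ℝ) := by
  have hKn : (0:ℕ) < 2 ^ N * (Nat.factorial N * Nat.factorial (N - 1)) :=
    Nat.mul_pos (Nat.pow_pos (by norm_num))
      (Nat.mul_pos (Nat.factorial_pos _) (Nat.factorial_pos _))
  have hKpos : (0:ℝ) < ((2 ^ N * (Nat.factorial N * Nat.factorial (N - 1)) : ℕ) : ℝ) := by
    exact_mod_cast hKn
  -- the normalized lower-bound sequence
  set H : ℕ → ℝ := fun D =>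
    (((D / 2 - (N.choose 2 + N) : ℕ) : ℝ) / D) ^ (N - 1) *
      (((((N + 1) * D) / (2 * N) - (N - 1).choose 2 : ℕ) : ℝ) / D) ^ 2 *
        (((D / (2 * N) : ℕ) : ℝ) / D) ^ (2 * N - 2) /
      ((2 ^ N * (Nat.factorial N * Nat.factorial (N - 1)) : ℕ) : ℝ) with hH
  -- limits
  have ht1 : Tendsto (fun D : ℕ => ((D / 2 - (N.choose 2 + N) : ℕ) : ℝ) / D) atTop
      (nhds ((1:ℝ)/2)) := by
    have h := tendsto_aux 1 2 (N.choose 2 + N) (by norm_num)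
    simp only [one_mul] at h
    have e : ((1:ℕ):ℝ)/((2:ℕ):ℝ) = (1:ℝ)/2 := by norm_num
    rwa [e] at h
  have ht2 : Tendsto (fun D : ℕ => ((((N + 1) * D) / (2 * N) - (N - 1).choose 2 : ℕ) : ℝ) / D)
      atTop (nhds (((N:ℝ)+1)/(2*(N:ℝ)))) := by
    have h := tendsto_aux (N + 1) (2 * N) ((N - 1).choose 2) (by omega)
    have e : (((N+1):ℕ):ℝ)/(((2*N):ℕ):ℝ) = ((N:ℝ)+1)/(2*(N:ℝ)) := by push_cast; ring
    rwa [e] at h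
  have ht3 : Tendsto (fun D : ℕ => ((D / (2 * N) : ℕ) : ℝ) / D) atTop
      (nhds ((1:ℝ)/(2*(N:ℝ)))) := by
    have h := tendsto_aux 1 (2 * N) 0 (by omega)
    simp only [one_mul, Nat.sub_zero] at h
    have e : ((1:ℕ):ℝ)/(((2*N):ℕ):ℝ) = (1:ℝ)/(2*(N:ℝ)) := by push_cast; ring
    rwa [e] at h
  have hKcast : ((2 ^ N * (Nat.factorial N * Nat.factorial (N - 1)) : ℕ) : ℝ) =
      (2:ℝ) ^ N * ((Nat.factorial N : ℝ) * (Nat.factorial (N - 1) : ℝ)) := by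
    push_cast
    ring
  have htH : Tendsto H atTop (nhds
      (((1:ℝ)/2) ^ (N-1) * ((((N:ℝ)+1)/(2*(N:ℝ))) ^ 2 * ((1:ℝ)/(2*(N:ℝ))) ^ (2*N-2)) /
        ((2 ^ N * (Nat.factorial N * Nat.factorial (N - 1)) : ℕ) : ℝ))) := by
    have h := (((ht1.pow (N-1)).mul ((ht2.pow 2).mul (ht3.pow (2*N-2)))).div_const
      (((2 ^ N * (Nat.factorial N * Nat.factorial (N - 1)) : ℕ) : ℝ)))
    have hfun : (fun D : ℕ =>
        (((D / 2 - (N.choose 2 + N) : ℕ) : ℝ) / D) ^ (N - 1) *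
          ((((((N + 1) * D) / (2 * N) - (N - 1).choose 2 : ℕ) : ℝ) / D) ^ 2 *
            (((D / (2 * N) : ℕ) : ℝ) / D) ^ (2 * N - 2)) /
          (((2 ^ N * (Nat.factorial N * Nat.factorial (N - 1)) : ℕ) : ℝ))) = H := by
      funext D
      simp only [hH]
      ring
    rw [hfun] at h
    exact h
  have hcC1 : c < ((1:ℝ)/2) ^ (N-1) * ((((N:ℝ)+1)/(2*(N:ℝ))) ^ 2 *
      ((1:ℝ)/(2*(N:ℝ))) ^ (2*N-2)) /
      ((2 ^ N * (Nat.factorial N * Nat.factorial (N - 1)) : ℕ) : ℝ) := by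
    rw [hKcast]
    exact lt_of_lt_of_le hc (S_le_C1 N hN)
  have hev1 : ∀ᶠ D in atTop, c < H D := htH.eventually (eventually_gt_nhds hcC1)
  have hev2 : ∀ᶠ D : ℕ in atTop, N ^ 3 < D := eventually_gt_atTop _
  have hev3 : ∀ᶠ D : ℕ in atTop, 1 ≤ D := eventually_ge_atTop _
  obtain ⟨D₀, hD₀⟩ := Filter.eventually_atTop.mp ((hev1.and hev2).and hev3)
  refine ⟨D₀, fun D hD => ?_⟩
  obtain ⟨⟨hcH, hD3⟩, hD1⟩ := hD₀ D hD
  have hDpos : (0:ℝ) < D := by exact_mod_cast hD1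
  have hDne : (D:ℝ) ≠ 0 := ne_of_gt hDpos
  have hsplit : 3 * N - 1 = (N - 1) + (2 + (2 * N - 2)) := by omega
  have hHeq : H D * (D:ℝ) ^ (3*N-1) =
      (((D / 2 - (N.choose 2 + N) : ℕ) : ℝ) ^ (N - 1) *
        (((((N + 1) * D) / (2 * N) - (N - 1).choose 2 : ℕ) : ℝ) ^ 2 *
          ((D / (2 * N) : ℕ) : ℝ) ^ (2 * N - 2))) /
      ((2 ^ N * (Nat.factorial N * Nat.factorial (N - 1)) : ℕ) : ℝ) := by
    simp only [hH]
    rw [hsplit, pow_add, pow_add]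
    rw [div_pow, div_pow, div_pow]
    field_simp
  have hnm := nat_master N D hN hD3
  have hcast : (((D / 2 - (N.choose 2 + N) : ℕ) : ℝ) ^ (N - 1) *
        (((((N + 1) * D) / (2 * N) - (N - 1).choose 2 : ℕ) : ℝ) ^ 2 *
          ((D / (2 * N) : ℕ) : ℝ) ^ (2 * N - 2))) ≤
      ((2 ^ N * (Nat.factorial N * Nat.factorial (N - 1)) : ℕ) : ℝ) * (targetDim N D : ℝ) := by
    exact_mod_cast hnm
  have hLB : (((D / 2 - (N.choose 2 + N) : ℕ) : ℝ) ^ (N - 1) *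
        (((((N + 1) * D) / (2 * N) - (N - 1).choose 2 : ℕ) : ℝ) ^ 2 *
          ((D / (2 * N) : ℕ) : ℝ) ^ (2 * N - 2))) /
      ((2 ^ N * (Nat.factorial N * Nat.factorial (N - 1)) : ℕ) : ℝ) ≤ (targetDim N D : ℝ) := by
    rw [div_le_iff₀ hKpos]
    exact hcast.trans_eq (mul_comm _ _)
  calc c * (D:ℝ) ^ (3*N-1) ≤ H D * (D:ℝ) ^ (3*N-1) :=
        mul_le_mul_of_nonneg_right hcH.le (by positivity)
    _ = _ := hHeq
    _ ≤ (targetDim N D : ℝ) := hLB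

end TDLB

/-- For `D > N³` the target dimension is at least `qbar N (D/2)` times the minimal
term of the restricted sum (tuples with `p₁ ≥ D/(2N)`), and asymptotically it is at
least `D^{3N-1}·e^{2N-1}/(π·2^{4N}·N^{4N-2})·(1+o(1))`. -/
theorem target_dim_lower_bound (N : ℕ) (hN : 2 ≤ N) :
    (∀ D : ℕ, D > N ^ 3 →
      qbar N (D / 2) *
          ((((N + 1) * D) / (2 * N) - (N - 1).choose 2 + 2).choose 2 *
            ∏ j ∈ Finset.range (N - 1), (j + D / (2 * N) + 2).choose 2) ≤
        targetDim N D) ∧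
    ∀ c : ℝ, c < Real.exp (2 * (N : ℝ) - 1) / (Real.pi * 2 ^ (4 * N) * (N : ℝ) ^ (4 * N - 2)) →
      ∃ D₀ : ℕ, ∀ D : ℕ, D ≥ D₀ → c * (D : ℝ) ^ (3 * N - 1) ≤ (targetDim N D : ℝ) := by
  constructor
  · exact fun D hD => TDLB.part1 N D hN hD
  · exact fun c hc => TDLB.part2 N hN c hc
end
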